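/- If a quasi-metric space (X,d) is Yoneda complete, then it is standard. -/

import Mathlib

open scoped ENNReal NNReal

universe u v w

/-- A quasi-metric space structure on `X`: distances valued in `[0,∞]`, with
`d x x = 0`, the triangle inequality, and separatedness. -/
structure QuasiMetric (X : Type u) where
  d : X → X → ℝ≥0∞
  d_self : ∀ x, d x x = 0
  d_triangle : ∀ x y z, d x z ≤ d x y + d y z
  d_separated : ∀ x y, d x y = 0 → d y x = 0 → x = y

namespace QuasiMetric

variable {X : Type u}

/-- The order on formal balls: `(x, r) ⊑ (y, s)` iff `s + d x y ≤ r`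
(equivalently `d x y ≤ r - s`). -/
def ballLE (q : QuasiMetric X) (p p' : X × ℝ≥0) : Prop :=
  (p'.2 : ℝ≥0∞) + q.d p.1 p'.1 ≤ (p.2 : ℝ≥0∞)

/-- `b` is a least upper bound of the set `S` of formal balls. -/
def IsBallLUB (q : QuasiMetric X) (S : Set (X × ℝ≥0)) (b : X × ℝ≥0) : Prop :=
  (∀ p ∈ S, q.ballLE p b) ∧ ∀ c, (∀ p ∈ S, q.ballLE p c) → q.ballLE b c

/-- `le` is a directed preorder (reflexive, transitive, directed). -/
def DirectedPre {D : Type v} (le : D → D → Prop) : Prop :=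
  (∀ i, le i i) ∧ (∀ i j k, le i j → le j k → le i k) ∧ ∀ i j, ∃ k, le i k ∧ le j k

/-- A net `x : D → X` is forward Cauchy: `inf_i sup_{k ≥ j ≥ i} d (x j) (x k) = 0`. -/
def ForwardCauchy (q : QuasiMetric X) {D : Type v} (le : D → D → Prop) (x : D → X) : Prop :=
  (⨅ i, ⨆ j, ⨆ (_ : le i j), ⨆ k, ⨆ (_ : le j k), q.d (x j) (x k)) = 0

/-- `a` is a Yoneda limit of the net `x : D → X`:
for all `y`, `d a y = inf_i sup_{j ≥ i} d (x j) y`. -/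
def IsYonedaLimit (q : QuasiMetric X) {D : Type v} (le : D → D → Prop) (x : D → X) (a : X) :
    Prop :=
  ∀ y, q.d a y = ⨅ i, ⨆ j, ⨆ (_ : le i j), q.d (x j) y

/-- `(X, d)` is Yoneda complete: every forward Cauchy net has a Yoneda limit. -/
def YonedaComplete (q : QuasiMetric X) : Prop :=
  ∀ (D : Type u) (le : D → D → Prop), DirectedPre le → Nonempty D →
    ∀ x : D → X, q.ForwardCauchy le x → ∃ a, q.IsYonedaLimit le x a

/-- `(X, d)` is standard: whenever a directed set of formal balls (viewed as a monotone
net indexed by itself) has a least upper bound, the corresponding forward Cauchy net of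
centers has a Yoneda limit. -/
def Standard (q : QuasiMetric X) : Prop :=
  ∀ S : Set (X × ℝ≥0), S.Nonempty → DirectedOn q.ballLE S →
    (∃ b, q.IsBallLUB S b) →
    ∃ a, q.IsYonedaLimit (fun p p' : ↥S => q.ballLE p.1 p'.1) (fun p : ↥S => p.1.1) a

/-- A weight of `(X, d)`: `φ x ≤ φ y + d x y`. -/
def IsWeight (q : QuasiMetric X) (φ : X → ℝ≥0∞) : Prop :=
  ∀ x y, φ x ≤ φ y + q.d x y

/-- The quasi-metric on weights: `ρ(φ, ψ) = sup_y (ψ y ⊖ φ y)`. -/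
noncomputable def rho {Y : Type v} (φ ψ : Y → ℝ≥0∞) : ℝ≥0∞ := ⨆ y, ψ y - φ y

/-- An ideal of `(X, d)`: a weight `φ` with `inf φ = 0` such that
`ρ(φ, min (λ, μ)) = min (ρ(φ,λ), ρ(φ,μ))` for all weights `λ`, `μ`. -/
def IsIdeal (q : QuasiMetric X) (φ : X → ℝ≥0∞) : Prop :=
  q.IsWeight φ ∧ (⨅ x, φ x) = 0 ∧
    ∀ l m : X → ℝ≥0∞, q.IsWeight l → q.IsWeight m →
      rho φ (fun x => min (l x) (m x)) = min (rho φ l) (rho φ m)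

/-- A weight `φ` is bounded: there are `r < ∞` and `a ∈ X` with `d x a ≤ r + φ x` for all `x`. -/
def BoundedWeight (q : QuasiMetric X) (φ : X → ℝ≥0∞) : Prop :=
  ∃ (r : ℝ≥0) (a : X), ∀ x, q.d x a ≤ (r : ℝ≥0∞) + φ x

/-- `b` is a colimit of the weight `φ`: for all `y`, `d b y = sup_x (d x y ⊖ φ x)`. -/
def IsColimit (q : QuasiMetric X) (φ : X → ℝ≥0∞) (b : X) : Prop :=
  ∀ y, q.d b y = ⨆ x, q.d x y - φ x

/-- The poset of formal balls is a dcpo: every (nonempty) directed subset has a lub. -/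
def BallDcpo (q : QuasiMetric X) : Prop :=
  ∀ S : Set (X × ℝ≥0), S.Nonempty → DirectedOn q.ballLE S → ∃ b, q.IsBallLUB S b

/-- The poset of formal balls is a local dcpo: every (nonempty) directed subset with an
upper bound has a lub. -/
def BallLocalDcpo (q : QuasiMetric X) : Prop :=
  ∀ S : Set (X × ℝ≥0), S.Nonempty → DirectedOn q.ballLE S →
    (∃ c, ∀ p ∈ S, q.ballLE p c) → ∃ b, q.IsBallLUB S b

/-- `u` is way below `v` in the poset of formal balls. -/
def ballWayBelow (q : QuasiMetric X) (u v : X × ℝ≥0) : Prop :=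
  ∀ S : Set (X × ℝ≥0), S.Nonempty → DirectedOn q.ballLE S →
    ∀ s, q.IsBallLUB S s → q.ballLE v s → ∃ p ∈ S, q.ballLE u p

/-- The poset of formal balls is a continuous poset: for every `p`, the set of elements
way below `p` is (nonempty) directed and has `p` as its least upper bound. -/
def BallContinuousPoset (q : QuasiMetric X) : Prop :=
  ∀ p : X × ℝ≥0,
    {u : X × ℝ≥0 | q.ballWayBelow u p}.Nonempty ∧
    DirectedOn q.ballLE {u : X × ℝ≥0 | q.ballWayBelow u p} ∧
    q.IsBallLUB {u : X × ℝ≥0 | q.ballWayBelow u p} p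

/-- A function `χ` is `𝓙`-closed: `ρ(ψ, χ) ≥ χ (colim ψ)` for every bounded ideal `ψ`
possessing a colimit. -/
def JClosed (q : QuasiMetric X) (χ : X → ℝ≥0∞) : Prop :=
  ∀ ψ : X → ℝ≥0∞, q.IsIdeal ψ → q.BoundedWeight ψ → ∀ c, q.IsColimit ψ c → χ c ≤ rho ψ χ

/-- `(X, d)` is a continuous `𝕁`-algebra: every bounded ideal has a colimit, and there is
a map `⇓` assigning to each `x` a bounded ideal `⇓x` with `ρ(⇓x, φ) = d x (colim φ)` for
all `x` and all bounded ideals `φ`. -/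
def ContinuousJAlgebra (q : QuasiMetric X) : Prop :=
  ∃ colim : (X → ℝ≥0∞) → X,
    (∀ φ, q.IsIdeal φ → q.BoundedWeight φ → q.IsColimit φ (colim φ)) ∧
    ∃ w : X → X → ℝ≥0∞,
      (∀ x, q.IsIdeal (w x) ∧ q.BoundedWeight (w x)) ∧
      ∀ (x : X) (φ : X → ℝ≥0∞), q.IsIdeal φ → q.BoundedWeight φ →
        rho (w x) φ = q.d x (colim φ)

/-- The quasi-metric space of all functions `X → [0,∞]` satisfying a predicate `P`
(e.g. the bounded weights, or the bounded ideals), with the quasi-metric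
`ρ(φ, ψ) = sup_x (ψ x ⊖ φ x)`. -/
noncomputable def weightSpace (q : QuasiMetric X) (P : (X → ℝ≥0∞) → Prop) :
    QuasiMetric {φ : X → ℝ≥0∞ // P φ} where
  d φ ψ := rho φ.1 ψ.1
  d_self φ := by simp [rho]
  d_triangle φ ψ χ := by
    refine iSup_le fun x => ?_
    calc χ.1 x - φ.1 x ≤ (χ.1 x - ψ.1 x) + (ψ.1 x - φ.1 x) := tsub_le_tsub_add_tsub
    _ ≤ rho ψ.1 χ.1 + rho φ.1 ψ.1 :=
        add_le_add (le_iSup (fun y => χ.1 y - ψ.1 y) x) (le_iSup (fun y => ψ.1 y - φ.1 y) x)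
    _ = rho φ.1 ψ.1 + rho ψ.1 χ.1 := add_comm _ _
  d_separated φ ψ h1 h2 := by
    apply Subtype.ext
    funext x
    have hx1 : ψ.1 x - φ.1 x ≤ 0 := by
      rw [← h1]; exact le_iSup (fun y => ψ.1 y - φ.1 y) x
    have hx2 : φ.1 x - ψ.1 x ≤ 0 := by
      rw [← h2]; exact le_iSup (fun y => φ.1 y - ψ.1 y) x
    exact le_antisymm (tsub_eq_zero_iff_le.mp (le_antisymm hx2 zero_le))
      (tsub_eq_zero_iff_le.mp (le_antisymm hx1 zero_le))

end QuasiMetric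

/-! A directed set `S` of formal balls is a monotone net over itself, and along it
`d(x_j, x_k) ≤ r_j - r_k ≤ r_i - inf_S r` whenever `i ⊑ j ⊑ k`. Choosing `i` with `r_i`
close to `inf_S r` shows that the net of centers is forward Cauchy, so Yoneda completeness
provides its Yoneda limit. -/

namespace QuasiMetric

variable {X : Type u} (q : QuasiMetric X)

theorem ballLE_refl (p : X × ℝ≥0) : q.ballLE p p := by
  simp [ballLE, q.d_self]

variable {q}

theorem ballLE.radius_le {p p' : X × ℝ≥0} (h : q.ballLE p p') : (p'.2 : ℝ≥0∞) ≤ p.2 :=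
  le_trans le_self_add h

theorem ballLE.dist_le {p p' : X × ℝ≥0} (h : q.ballLE p p') :
    q.d p.1 p'.1 ≤ (p.2 : ℝ≥0∞) - p'.2 :=
  ENNReal.le_sub_of_add_le_left ENNReal.coe_ne_top h

theorem ballLE.trans {p p' p'' : X × ℝ≥0} (h : q.ballLE p p') (h' : q.ballLE p' p'') :
    q.ballLE p p'' :=
  calc (p''.2 : ℝ≥0∞) + q.d p.1 p''.1
      ≤ ((p''.2 : ℝ≥0∞) + q.d p'.1 p''.1) + q.d p.1 p'.1 := by
        rw [add_assoc, add_comm (q.d p'.1 p''.1)]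
        gcongr
        exact q.d_triangle _ _ _
    _ ≤ p'.2 + q.d p.1 p'.1 := by gcongr; exact h'
    _ ≤ p.2 := h

theorem directedPre_ballLE_subtype {S : Set (X × ℝ≥0)} (hS : DirectedOn q.ballLE S) :
    DirectedPre (fun p p' : ↥S => q.ballLE p.1 p'.1) := by
  refine ⟨fun p => q.ballLE_refl p.1, fun _ _ _ => ballLE.trans, fun p p' => ?_⟩
  obtain ⟨c, hcS, hpc, hp'c⟩ := hS p.1 p.2 p'.1 p'.2
  exact ⟨⟨c, hcS⟩, hpc, hp'c⟩

theorem forwardCauchy_of_ballLE_monotone {D : Type v} [Nonempty D] (le : D → D → Prop)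
    (p : D → X × ℝ≥0) (hp : ∀ i j, le i j → q.ballLE (p i) (p j)) :
    q.ForwardCauchy le (fun i => (p i).1) := by
  refine le_antisymm (ENNReal.le_of_forall_pos_le_add fun ε hε _ => ?_) zero_le
  set t : ℝ≥0∞ := ⨅ i, ((p i).2 : ℝ≥0∞)
  have ht : t ≠ ⊤ := ne_top_of_le_ne_top ENNReal.coe_ne_top (iInf_le _ (Classical.arbitrary D))
  obtain ⟨i, hi⟩ := iInf_lt_iff.mp (ENNReal.lt_add_right ht (ENNReal.coe_ne_zero.mpr hε.ne'))
  rw [zero_add]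
  refine iInf_le_of_le i (iSup₂_le fun j hij => iSup₂_le fun k hjk => ?_)
  calc q.d (p j).1 (p k).1 ≤ ((p j).2 : ℝ≥0∞) - (p k).2 := (hp j k hjk).dist_le
    _ ≤ ((p i).2 : ℝ≥0∞) - t := tsub_le_tsub (hp i j hij).radius_le (iInf_le _ k)
    _ ≤ ε := tsub_le_iff_left.mpr hi.le

end QuasiMetric

open QuasiMetric in
/-- every Yoneda complete quasi-metric space is standard. -/
theorem stmt3 {X : Type u} (q : QuasiMetric X) (h : q.YonedaComplete) : q.Standard := by
  intro S hne hdir _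
  have : Nonempty ↥S := hne.to_subtype
  exact h ↥S _ (directedPre_ballLE_subtype hdir) this _
    (forwardCauchy_of_ballLE_monotone _ (fun p : ↥S => p.1) fun _ _ => id)
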